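/- Let P ⊆ ℝ^d be a finite β-stable instance for k-means, and let {C_1,…,C_k} be a partition of P with centroids a_1,…,a_k whose k-means cost is at most (1+β/2)·OPT_k. For a set S of k centers, define the interaction number N(S) := ∑_{x∈S} |I(x)|, where I(x) is the set of clusters C_j such that cost(a_j,x) ≥ 32·Δ_j and cost(a_j,x) ≤ 16·cost(a_j,S) with Δ_j := cost(C_j,a_j)/|C_j|. Then cost(P,S) ≥ OPT_k · max(1, (1/768)·(N(S)/k − 1)·β). -/

import Mathlib

/-!
Suppose `x ∈ S` interacts with two clusters `j ≠ j'`. Moving both centroids `a_j`, `a_j'` onto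
`x` gives a `(k - 1)`-clustering costing at most
`cost {C_i} + |C_j| ‖a_j - x‖² + |C_j'| ‖a_j' - x‖²`, so by stability and
`cost {C_i} ≤ (1 + β/2) OPT_k` the larger of the two extra terms is at least `β OPT_k / 4`.
On the other hand, interaction means that `a_j` is far from `S` compared with the spread `√Δ_j`
of `C_j`; by the triangle inequality and Cauchy–Schwarz, `S` then pays at least
`|C_j| ‖a_j - x‖² / 192` on `C_j`. So each `x ∈ S` charges `β OPT_k / 768` to all but one of its
interacting clusters, and summing over `S` gives `(N(S) - k) β OPT_k ≤ 768 k cost(P, S)`.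
-/

open Finset

noncomputable section

/-- `ℝ^d` as a Euclidean space. -/
abbrev Pt (d : ℕ) := EuclideanSpace ℝ (Fin d)

/-- `cost(p,S) = min_{s ∈ S} ‖p - s‖²`. -/
noncomputable def pcost {d : ℕ} (p : Pt d) (S : Finset (Pt d)) : ℝ :=
  sInf ((fun s => ‖p - s‖ ^ 2) '' (S : Set (Pt d)))

/-- `cost(P,S) = ∑_{p ∈ P} min_{s ∈ S} ‖p - s‖²`. -/
noncomputable def scost {d : ℕ} (P S : Finset (Pt d)) : ℝ :=
  ∑ p ∈ P, pcost p S

/-- `OPT_j`: the optimal k-means cost of `P` with `j` centers. -/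
noncomputable def kmOPT {d : ℕ} (P : Finset (Pt d)) (j : ℕ) : ℝ :=
  sInf ((fun S : Finset (Pt d) => scost P S) '' {S : Finset (Pt d) | S.card = j})

open RealInnerProductSpace

section Centroid

variable {E : Type*} [NormedAddCommGroup E] [InnerProductSpace ℝ E]

def centerOfMass (C : Finset E) : E := ((C.card : ℝ))⁻¹ • ∑ p ∈ C, p

theorem sum_sub_centerOfMass (C : Finset E) : ∑ p ∈ C, (p - centerOfMass C) = 0 := by
  rcases C.eq_empty_or_nonempty with rfl | hC
  · simp
  rw [sum_sub_distrib, sum_const, ← Nat.cast_smul_eq_nsmul ℝ, centerOfMass, smul_smul,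
    mul_inv_cancel₀ (by simpa using hC.ne_empty), one_smul, sub_self]

theorem sum_norm_sub_sq_eq (C : Finset E) (y : E) :
    ∑ p ∈ C, ‖p - y‖ ^ 2
      = ∑ p ∈ C, ‖p - centerOfMass C‖ ^ 2 + C.card * ‖centerOfMass C - y‖ ^ 2 := by
  have h : ∀ p, ‖p - y‖ ^ 2 = ‖p - centerOfMass C‖ ^ 2
      + 2 * ⟪p - centerOfMass C, centerOfMass C - y⟫ + ‖centerOfMass C - y‖ ^ 2 := fun p => by
    rw [← norm_add_sq_real, sub_add_sub_cancel]
  simp only [sum_congr rfl fun p _ => h p, sum_add_distrib, ← mul_sum, ← sum_inner,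
    sum_sub_centerOfMass, inner_zero_left, sum_const, nsmul_eq_mul]
  ring

end Centroid

section Cost

variable {d : ℕ}

theorem pcost_nonneg (p : Pt d) (S : Finset (Pt d)) : 0 ≤ pcost p S :=
  Real.sInf_nonneg (by rintro x ⟨s, _, rfl⟩; positivity)

theorem pcost_le (p : Pt d) {S : Finset (Pt d)} {s : Pt d} (hs : s ∈ S) :
    pcost p S ≤ ‖p - s‖ ^ 2 :=
  csInf_le ⟨0, by rintro x ⟨t, _, rfl⟩; positivity⟩ ⟨s, hs, rfl⟩

theorem exists_pcost_eq (p : Pt d) {S : Finset (Pt d)} (hS : S.Nonempty) :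
    ∃ s ∈ S, pcost p S = ‖p - s‖ ^ 2 := by
  obtain ⟨s, hs, hmin⟩ := S.exists_min_image (fun s => ‖p - s‖ ^ 2) hS
  refine ⟨s, hs, (pcost_le p hs).antisymm ?_⟩
  exact le_csInf ⟨_, s, hs, rfl⟩ (by rintro x ⟨t, ht, rfl⟩; exact hmin t ht)

theorem sqrt_pcost_le_norm_sub_add (a p : Pt d) {S : Finset (Pt d)} (hS : S.Nonempty) :
    √(pcost a S) ≤ ‖a - p‖ + √(pcost p S) := by
  obtain ⟨s, hs, hps⟩ := exists_pcost_eq p hS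
  calc √(pcost a S) ≤ ‖a - s‖ :=
        (Real.sqrt_le_sqrt (pcost_le a hs)).trans_eq (Real.sqrt_sq (norm_nonneg _))
    _ ≤ ‖a - p‖ + ‖p - s‖ := norm_sub_le_norm_sub_add_norm_sub a p s
    _ = ‖a - p‖ + √(pcost p S) := by rw [hps, Real.sqrt_sq (norm_nonneg _)]

theorem kmOPT_le_scost (P : Finset (Pt d)) {S : Finset (Pt d)} {m : ℕ} (hS : S.card = m) :
    kmOPT P m ≤ scost P S :=
  csInf_le ⟨0, by rintro x ⟨T, _, rfl⟩; exact sum_nonneg fun p _ => pcost_nonneg p T⟩ ⟨S, hS, rfl⟩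

theorem kmOPT_nonneg (P : Finset (Pt d)) (m : ℕ) : 0 ≤ kmOPT P m :=
  Real.sInf_nonneg (by rintro x ⟨S, _, rfl⟩; exact sum_nonneg fun p _ => pcost_nonneg p S)

theorem kmOPT_le_sum_norm_sub_sq (P : Finset (Pt d)) (f : Pt d → Pt d) {m : ℕ}
    (hf : (P.image f).card ≤ m) : kmOPT P m ≤ ∑ p ∈ P, ‖p - f p‖ ^ 2 := by
  classical
  rcases subsingleton_or_nontrivial (Pt d) with hsub | hnt
  · -- for `d = 0` every cost vanishes (and `sInf ∅ = 0` when no `m`-set exists)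
    refine (Real.sInf_nonpos ?_).trans (sum_nonneg fun p _ => by positivity)
    rintro x ⟨S, _, rfl⟩
    exact sum_nonpos fun p _ => Real.sInf_nonpos <| by
      rintro _ ⟨s, _, rfl⟩
      simp [Subsingleton.elim p s]
  · have := Module.Free.infinite ℝ (Pt d)
    obtain ⟨S, hsub, hS⟩ := Infinite.exists_superset_card_eq _ m hf
    exact (kmOPT_le_scost P hS).trans <|
      sum_le_sum fun p hp => pcost_le p (hsub (mem_image_of_mem f hp))

/-- Moving the centers of both clusters `j ≠ j'` to `x` leaves at most `card ι - 1` centers. -/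
theorem kmOPT_card_sub_one_le {ι : Type*} [Fintype ι] [DecidableEq ι] (P : Finset (Pt d))
    (cl : Pt d → ι) (x : Pt d) {j j' : ι} (hjj' : j ≠ j') :
    kmOPT P (Fintype.card ι - 1) ≤
      ∑ i, ∑ p ∈ {p ∈ P | cl p = i}, ‖p - centerOfMass {p ∈ P | cl p = i}‖ ^ 2
        + #{p ∈ P | cl p = j} * ‖centerOfMass {p ∈ P | cl p = j} - x‖ ^ 2
        + #{p ∈ P | cl p = j'} * ‖centerOfMass {p ∈ P | cl p = j'} - x‖ ^ 2 := by
  classical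
  set C : ι → Finset (Pt d) := fun i => {p ∈ P | cl p = i}
  set c : ι → Pt d := fun i => if i = j ∨ i = j' then x else centerOfMass (C i)
  have hcard : (P.image (c ∘ cl)).card ≤ Fintype.card ι - 1 := by
    have hlt : (univ.image c).card < #(univ : Finset ι) := by
      refine card_image_le.lt_of_ne fun h => hjj' ?_
      exact card_image_iff.1 h (mem_univ j) (mem_univ j') (by simp [c])
    have hsub : P.image (c ∘ cl) ⊆ univ.image c := by
      intro y hy
      obtain ⟨p, -, rfl⟩ := mem_image.1 hy
      exact mem_image_of_mem c (mem_univ _)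
    rw [card_univ] at hlt
    have := card_le_card hsub
    omega
  calc kmOPT P (Fintype.card ι - 1) ≤ ∑ p ∈ P, ‖p - c (cl p)‖ ^ 2 :=
        kmOPT_le_sum_norm_sub_sq P (c ∘ cl) hcard
    _ = ∑ i, ∑ p ∈ C i, ‖p - c i‖ ^ 2 := by
        rw [← sum_fiberwise P cl]
        exact sum_congr rfl fun i _ => sum_congr rfl fun p hp => by rw [(mem_filter.1 hp).2]
    _ = ∑ i, ∑ p ∈ C i, ‖p - centerOfMass (C i)‖ ^ 2
          + ∑ i, #(C i) * ‖centerOfMass (C i) - c i‖ ^ 2 := by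
        simp only [sum_norm_sub_sq_eq _ (c _), sum_add_distrib]
    _ = _ := by
        rw [add_assoc, Fintype.sum_eq_add j j' hjj' (f := fun i =>
          #(C i) * ‖centerOfMass (C i) - c i‖ ^ 2) fun i hi => by simp [c, hi.1, hi.2]]
        simp only [c, true_or, or_true, ↓reduceIte]
        rfl

end Cost

section ClusterCost

/-- The left side is the tangent line of `t ↦ (δ - t) ^ 2` at `t = σ`. -/
theorem sq_sub_sq_sub_two_mul_le_sq {σ δ t q : ℝ} (hσδ : σ ≤ δ) (hq : 0 ≤ q)
    (h : δ ≤ t + q) : δ ^ 2 - σ ^ 2 - 2 * (δ - σ) * t ≤ q ^ 2 := by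
  rcases le_total t δ with htδ | hδt
  · have hδt : δ - t ≤ q := by linarith
    nlinarith [sq_nonneg (t - σ), mul_le_mul hδt hδt (sub_nonneg.2 htδ) hq]
  · nlinarith [mul_nonneg (sub_nonneg.2 hσδ) (sub_nonneg.2 hδt)]

theorem le_mul_sqrt_sub_sqrt_sq {Δ D r : ℝ} (hΔ : 0 ≤ Δ) (h32 : 32 * Δ ≤ r) (h16 : r ≤ 16 * D) :
    r ≤ 192 * (√D - √Δ) ^ 2 := by
  have hr : 0 ≤ r := by linarith
  set ρ := √r
  have hρ : 0 ≤ ρ := Real.sqrt_nonneg r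
  have hρr : ρ ^ 2 = r := Real.sq_sqrt hr
  -- `20 / 113` is a rational upper bound for `1 / √32`
  have hΔρ : √Δ ≤ 20 / 113 * ρ :=
    Real.sqrt_le_iff.2 ⟨by positivity, by nlinarith⟩
  have hDρ : ρ / 4 ≤ √D :=
    Real.le_sqrt_of_sq_le (by nlinarith)
  nlinarith [mul_le_mul (by linarith : 33 / 452 * ρ ≤ √D - √Δ)
    (by linarith : 33 / 452 * ρ ≤ √D - √Δ) (by positivity) (by linarith)]

variable {d : ℕ} {S : Finset (Pt d)}

/-- Every point of `C` lies within `‖p - a‖` of `a`, so its cost is at least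
`(√(pcost a S) - ‖p - a‖) ^ 2`; on average `‖p - a‖ ≤ √Δ` by Cauchy–Schwarz. -/
theorem card_mul_sqrt_sub_sqrt_sq_le_sum_pcost (hS : S.Nonempty) (C : Finset (Pt d)) (a : Pt d)
    {Δ : ℝ} (hΔ0 : 0 ≤ Δ) (hΔ : ∑ p ∈ C, ‖p - a‖ ^ 2 ≤ #C * Δ) (hΔD : Δ ≤ pcost a S) :
    #C * (√(pcost a S) - √Δ) ^ 2 ≤ ∑ p ∈ C, pcost p S := by
  set δ := √(pcost a S)
  set σ := √Δ
  have hσδ : σ ≤ δ := Real.sqrt_le_sqrt hΔD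
  have hpoint : ∀ p, δ ^ 2 - σ ^ 2 - 2 * (δ - σ) * ‖p - a‖ ≤ pcost p S := fun p => by
    have h := sqrt_pcost_le_norm_sub_add a p hS
    rw [norm_sub_rev] at h
    simpa [Real.sq_sqrt (pcost_nonneg p S)] using
      sq_sub_sq_sub_two_mul_le_sq hσδ (Real.sqrt_nonneg _) h
  have hCS : ∑ p ∈ C, ‖p - a‖ ≤ #C * σ := by
    refine (pow_le_pow_iff_left₀ (sum_nonneg fun p _ => norm_nonneg _) (by positivity)
      two_ne_zero).1 ?_
    calc (∑ p ∈ C, ‖p - a‖) ^ 2 ≤ #C * ∑ p ∈ C, ‖p - a‖ ^ 2 := sq_sum_le_card_mul_sum_sq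
      _ ≤ #C * (#C * Δ) := by gcongr
      _ = (#C * σ) ^ 2 := by rw [mul_pow, Real.sq_sqrt hΔ0]; ring
  calc #C * (δ - σ) ^ 2 = #C * (δ ^ 2 - σ ^ 2) - 2 * (δ - σ) * (#C * σ) := by ring
    _ ≤ #C * (δ ^ 2 - σ ^ 2) - 2 * (δ - σ) * ∑ p ∈ C, ‖p - a‖ := by
        gcongr
    _ = ∑ p ∈ C, (δ ^ 2 - σ ^ 2 - 2 * (δ - σ) * ‖p - a‖) := by
        rw [sum_sub_distrib, sum_const, nsmul_eq_mul, mul_sum]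
    _ ≤ ∑ p ∈ C, pcost p S := sum_le_sum fun p _ => hpoint p

theorem card_mul_le_sum_pcost (hS : S.Nonempty) (C : Finset (Pt d)) (a : Pt d) {r : ℝ}
    (h32 : 32 * ((∑ p ∈ C, ‖p - a‖ ^ 2) / #C) ≤ r) (h16 : r ≤ 16 * pcost a S) :
    #C * r ≤ 192 * ∑ p ∈ C, pcost p S := by
  set Δ := (∑ p ∈ C, ‖p - a‖ ^ 2) / #C
  have hΔ0 : 0 ≤ Δ := by positivity
  have hΔ : ∑ p ∈ C, ‖p - a‖ ^ 2 ≤ #C * Δ := by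
    rcases C.eq_empty_or_nonempty with rfl | hC
    · simp
    · rw [mul_div_cancel₀ _ (by simpa using hC.ne_empty)]
  have hΔD : Δ ≤ pcost a S := by linarith
  calc #C * r ≤ #C * (192 * (√(pcost a S) - √Δ) ^ 2) := by
        gcongr
        exact le_mul_sqrt_sub_sqrt_sq hΔ0 h32 h16
    _ ≤ 192 * ∑ p ∈ C, pcost p S := by
        nlinarith [card_mul_sqrt_sub_sqrt_sq_le_sum_pcost hS C a hΔ0 hΔ hΔD]

end ClusterCost

theorem card_sub_one_mul_le_sum {ι : Type*} [Fintype ι] (I : Finset ι) (w g : ι → ℝ) {c : ℝ}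
    (hc : 0 ≤ c) (hg : ∀ j, 0 ≤ g j) (h : ∀ j ∈ I, ∀ j' ∈ I, j ≠ j' → w j' ≤ w j → c ≤ g j) :
    (#I - 1) * c ≤ ∑ j, g j := by
  classical
  rcases I.eq_empty_or_nonempty with rfl | hI
  · simpa using (neg_nonpos.2 hc).trans (sum_nonneg fun j _ => hg j)
  obtain ⟨j', hj', hmin⟩ := I.exists_min_image w hI
  calc (#I - 1) * c = ∑ j ∈ I.erase j', c := by
        rw [sum_const, card_erase_of_mem hj', nsmul_eq_mul, Nat.cast_pred (card_pos.2 hI)]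
    _ ≤ ∑ j ∈ I.erase j', g j := sum_le_sum fun j hj =>
        h j (mem_of_mem_erase hj) j' hj' (ne_of_mem_erase hj) (hmin j (mem_of_mem_erase hj))
    _ ≤ ∑ j, g j := sum_le_sum_of_subset_of_nonneg (subset_univ _) fun j _ _ => hg j

theorem mul_max_one_le {O Z β N K : ℝ} {k : ℕ} (hβ : 0 < β) (hK : 0 < K) (hO : 0 ≤ O)
    (hOZ : O ≤ Z) (h : (N - k) * (β * O) ≤ K * k * Z) :
    O * max 1 (1 / K * (N / k - 1) * β) ≤ Z := by
  rw [mul_max_of_nonneg _ _ hO, mul_one]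
  refine max_le hOZ ?_
  rcases k.eq_zero_or_pos with rfl | hk
  · have : 0 ≤ O * β / K := by positivity
    simp only [Nat.cast_zero, div_zero, zero_sub]
    linarith [show O * (1 / K * -1 * β) = -(O * β / K) by ring]
  · have hkR : (0 : ℝ) < k := Nat.cast_pos.2 hk
    rw [show O * (1 / K * (N / k - 1) * β) = (N - k) * (β * O) / (K * k) by field_simp,
      div_le_iff₀ (by positivity)]
    linarith

/-- For β-stable instances, the cost of any solution `S` is lower bounded in
terms of its interaction number `N(S)`. -/
theorem stable_cost_vs_interaction_number
    {d : ℕ} (k : ℕ) (β : ℝ) (P : Finset (Pt d)) (cl : Pt d → Fin k)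
    (S : Finset (Pt d))
    (hβ : 0 < β)
    (hstable : kmOPT P k * (1 + β) ≤ kmOPT P (k - 1))
    (hS : S.card = k) :
    -- the clusters of the partition, their centroids and their average costs
    let Cj : Fin k → Finset (Pt d) := fun j => P.filter fun p => cl p = j
    let a : Fin k → Pt d := fun j => (((Cj j).card : ℝ))⁻¹ • ∑ p ∈ Cj j, p
    let Δ : Fin k → ℝ := fun j => (∑ p ∈ Cj j, ‖p - a j‖ ^ 2) / ((Cj j).card : ℝ)
    -- the clustering is a (1+β/2)-approximation
    (∑ j : Fin k, ∑ p ∈ Cj j, ‖p - a j‖ ^ 2) ≤ (1 + β / 2) * kmOPT P k →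
    -- `I(x)`: the clusters interacting with `x`; `N(S) := ∑_{x ∈ S} |I(x)|`
    let I : Pt d → Finset (Fin k) := fun x => Finset.univ.filter fun j =>
      32 * Δ j ≤ ‖a j - x‖ ^ 2 ∧ ‖a j - x‖ ^ 2 ≤ 16 * pcost (a j) S
    let N : ℝ := ∑ x ∈ S, ((I x).card : ℝ)
    kmOPT P k * max 1 ((1 / 768 : ℝ) * (N / (k : ℝ) - 1) * β) ≤ scost P S := by
  intro Cj a Δ hA I N
  set OPT := kmOPT P k
  have hZ : ∑ j, ∑ p ∈ Cj j, pcost p S = scost P S := sum_fiberwise P cl _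
  have hpair : ∀ x, ∀ j ∈ I x, ∀ j' ∈ I x, j ≠ j' →
      #(Cj j') * ‖a j' - x‖ ^ 2 ≤ #(Cj j) * ‖a j - x‖ ^ 2 →
      β * OPT ≤ 768 * ∑ p ∈ Cj j, pcost p S := by
    intro x j hj j' _ hjj' hw
    have hmerge : kmOPT P (k - 1) ≤ ∑ i, ∑ p ∈ Cj i, ‖p - a i‖ ^ 2
        + #(Cj j) * ‖a j - x‖ ^ 2 + #(Cj j') * ‖a j' - x‖ ^ 2 := by
      have h := kmOPT_card_sub_one_le P cl x hjj'
      rwa [Fintype.card_fin] at h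
    obtain ⟨h32, h16⟩ := (mem_filter.1 hj).2
    have hS0 : S.Nonempty := card_pos.1 (hS ▸ j.pos)
    have hcl := card_mul_le_sum_pcost hS0 (Cj j) (a j) h32 h16
    linarith
  have hcenter : ∀ x ∈ S, (#(I x) - 1) * (β * OPT) ≤ ∑ j, 768 * ∑ p ∈ Cj j, pcost p S :=
    fun x _ => card_sub_one_mul_le_sum (I x) _ _ (mul_nonneg hβ.le (kmOPT_nonneg P k))
      (fun j => mul_nonneg (by norm_num) (sum_nonneg fun p _ => pcost_nonneg p S)) (hpair x)
  refine mul_max_one_le hβ (by norm_num) (kmOPT_nonneg P k) (kmOPT_le_scost P hS) ?_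
  calc (N - k) * (β * OPT) = ∑ x ∈ S, (#(I x) - 1) * (β * OPT) := by
        rw [← sum_mul, sum_sub_distrib, sum_const, hS]; simp only [nsmul_eq_mul, mul_one, N]
    _ ≤ ∑ x ∈ S, ∑ j, 768 * ∑ p ∈ Cj j, pcost p S := sum_le_sum hcenter
    _ = 768 * k * scost P S := by rw [sum_const, hS, ← mul_sum, hZ, nsmul_eq_mul]; ring
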